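/- For all positive integers n, s(n,4) = (-1)^n ((n-1)!/6) ((H_{n-1})^3 - 3 H_{n-1} H_{n-1}^{(2)} + 2 H_{n-1}^{(3)}). -/

import Mathlib

/-!
Multiplying the falling factorial by `x - n` gives the recurrence
`s(n+1, k+1) = s(n, k) - n s(n, k+1)`. Since `(-1)^(n-k) s(n+1, k+1) / n!` is the elementary
symmetric function `e_k(1, 1/2, …, 1/n)`, Newton's identities predict closed forms in the power
sums `H_n^{(p)}` for `k = 1, 2, 3`; each one satisfies the recurrence, by induction on `n` using
the previous one.
-/

/-- The signed Stirling numbers of the first kind, defined as the coefficients of the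
falling factorial `x(x-1)⋯(x-n+1) = ∑_{k=0}^n s(n,k) x^k`. -/
noncomputable def stirlingFirst (n k : ℕ) : ℤ := (descPochhammer ℤ n).coeff k

/-- The generalized harmonic number `H_n^{(m)} = ∑_{k=1}^n 1/k^m` as a real number. -/
noncomputable def genHarmonic (m n : ℕ) : ℝ := ∑ k ∈ Finset.range n, (1 : ℝ) / ((k + 1 : ℝ)) ^ m

open Polynomial

@[simp]
lemma genHarmonic_zero (m : ℕ) : genHarmonic m 0 = 0 := by
  simp [genHarmonic]

lemma genHarmonic_succ (m n : ℕ) :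
    genHarmonic m (n + 1) = genHarmonic m n + 1 / ((n + 1 : ℝ)) ^ m :=
  Finset.sum_range_succ _ _

@[simp]
lemma stirlingFirst_zero_succ (k : ℕ) : stirlingFirst 0 (k + 1) = 0 := by
  simp [stirlingFirst, coeff_one]

@[simp]
lemma stirlingFirst_succ_zero (n : ℕ) : stirlingFirst (n + 1) 0 = 0 := by
  rw [stirlingFirst, coeff_zero_eq_eval_zero, descPochhammer_ne_zero_eval_zero _ n.succ_ne_zero]

lemma stirlingFirst_succ_succ (n k : ℕ) :
    stirlingFirst (n + 1) (k + 1) = stirlingFirst n k - n * stirlingFirst n (k + 1) := by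
  rw [stirlingFirst, descPochhammer_succ_right, mul_sub, coeff_sub, coeff_mul_X,
    ← C_eq_natCast, coeff_mul_C, mul_comm]
  rfl

lemma stirlingFirst_succ_one (n : ℕ) :
    (stirlingFirst (n + 1) 1 : ℝ) = (-1) ^ n * n.factorial := by
  induction n with
  | zero => simp [stirlingFirst, coeff_X]
  | succ n ih =>
    rw [stirlingFirst_succ_succ]
    push_cast [ih, Nat.factorial_succ]
    simp only [stirlingFirst_succ_zero, Int.cast_zero]
    ring

lemma stirlingFirst_succ_two (n : ℕ) :
    (stirlingFirst (n + 1) 2 : ℝ) = (-1) ^ (n + 1) * n.factorial * genHarmonic 1 n := by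
  induction n with
  | zero => simp [stirlingFirst, coeff_X]
  | succ n ih =>
    rw [stirlingFirst_succ_succ]
    push_cast [ih, stirlingFirst_succ_one, genHarmonic_succ, Nat.factorial_succ]
    field_simp
    ring

lemma stirlingFirst_succ_three (n : ℕ) :
    (stirlingFirst (n + 1) 3 : ℝ) =
      (-1) ^ n * (n.factorial / 2) * (genHarmonic 1 n ^ 2 - genHarmonic 2 n) := by
  induction n with
  | zero => simp [stirlingFirst, coeff_X]
  | succ n ih =>
    rw [stirlingFirst_succ_succ]
    push_cast [ih, stirlingFirst_succ_two, genHarmonic_succ, Nat.factorial_succ]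
    field_simp
    ring

lemma stirlingFirst_succ_four (n : ℕ) :
    (stirlingFirst (n + 1) 4 : ℝ) = (-1) ^ (n + 1) * (n.factorial / 6) *
      (genHarmonic 1 n ^ 3 - 3 * genHarmonic 1 n * genHarmonic 2 n + 2 * genHarmonic 3 n) := by
  induction n with
  | zero => simp [stirlingFirst, coeff_X]
  | succ n ih =>
    rw [stirlingFirst_succ_succ]
    push_cast [ih, stirlingFirst_succ_three, genHarmonic_succ, Nat.factorial_succ]
    field_simp
    ring

theorem stirlingFirst_four_general (n : ℕ) :
    (stirlingFirst n 4 : ℝ) = (-1) ^ n * (((n - 1).factorial : ℝ) / 6) * ((genHarmonic 1 (n - 1)) ^ 3 - 3 * genHarmonic 1 (n - 1) * genHarmonic 2 (n - 1) + 2 * genHarmonic 3 (n - 1)) := by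
  cases n with
  | zero => simp
  | succ n => simpa using stirlingFirst_succ_four n

theorem stirlingFirst_four (n : ℕ) (hn : 0 < n) :
    (stirlingFirst n 4 : ℝ) = (-1) ^ n * (((n - 1).factorial : ℝ) / 6) * ((genHarmonic 1 (n - 1)) ^ 3 - 3 * genHarmonic 1 (n - 1) * genHarmonic 2 (n - 1) + 2 * genHarmonic 3 (n - 1)) :=
  stirlingFirst_four_general n
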